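/- arXiv:0804.0534 — 3 statements merged into one kernel-verified Lean document; each statement's English description precedes it below -/
import Mathlib

section
/- Let 0 < q < 1, let f be a real number with fractional part β = {f}, and suppose β ≠ 1/2. Then f + c(β, q) is not an integer, and ⌊f + c(β, q)⌋ = ⌊f⌋ + ⌊β + c(β, q)⌋. -/
open Filter

/-- The constant `c(β, q)` from the paper. -/
noncomputable def cConst (q β : ℝ) : ℝ :=
  1 - 1 / (1 + q ^ (-β)) - β
    - ∑' ℓ : ℕ, 1 / (1 + q ^ (-(ℓ : ℝ) - β - 1))
    + ∑' ℓ : ℕ, 1 / (1 + q ^ (-(ℓ : ℝ) + β - 1))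

/-- The basic building block `g(x) = 1/(1+q^{-x})`. -/
noncomputable def gg (q x : ℝ) : ℝ := 1 / (1 + q ^ (-x))

section Aux
variable {q : ℝ}

lemma one_add_pos (hq0 : 0 < q) (x : ℝ) : 0 < 1 + q ^ (-x) := by
  have := Real.rpow_pos_of_pos hq0 (-x); linarith

lemma gg_pos (hq0 : 0 < q) (x : ℝ) : 0 < gg q x :=
  div_pos one_pos (one_add_pos hq0 x)

lemma gg_lt_one (hq0 : 0 < q) (x : ℝ) : gg q x < 1 := by
  rw [gg, div_lt_one (one_add_pos hq0 x)]
  have := Real.rpow_pos_of_pos hq0 (-x); linarith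

lemma gg_anti (hq0 : 0 < q) (hq1 : q < 1) {x y : ℝ} (h : x ≤ y) : gg q y ≤ gg q x := by
  apply one_div_le_one_div_of_le (one_add_pos hq0 x)
  have := Real.rpow_le_rpow_of_exponent_ge hq0 hq1.le (neg_le_neg h)
  linarith

lemma gg_anti_strict (hq0 : 0 < q) (hq1 : q < 1) {x y : ℝ} (h : x < y) : gg q y < gg q x := by
  apply one_div_lt_one_div_of_lt (one_add_pos hq0 x)
  have := Real.rpow_lt_rpow_of_exponent_gt hq0 hq1 (neg_lt_neg h)
  linarith

lemma gg_le_rpow (hq0 : 0 < q) (x : ℝ) : gg q x ≤ q ^ x := by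
  rw [gg, div_le_iff₀ (one_add_pos hq0 x)]
  have h1 : q ^ x * q ^ (-x) = 1 := by
    rw [← Real.rpow_add hq0]; simp
  have h2 : 0 < q ^ x := Real.rpow_pos_of_pos hq0 x
  nlinarith

lemma gg_zero (hq0 : 0 < q) : gg q 0 = 1 / 2 := by
  rw [gg, neg_zero, Real.rpow_zero]; norm_num

lemma summable_gg (hq0 : 0 < q) (hq1 : q < 1) (a : ℝ) : Summable (fun ℓ : ℕ => gg q ((ℓ : ℝ) + a)) := by
  apply Summable.of_nonneg_of_le (fun ℓ => (gg_pos hq0 _).le) (fun ℓ => ?_)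
    ((summable_geometric_of_lt_one hq0.le hq1).mul_left (q ^ a))
  calc gg q ((ℓ : ℝ) + a) ≤ q ^ ((ℓ : ℝ) + a) := gg_le_rpow hq0 _
    _ = q ^ a * q ^ ℓ := by
        rw [Real.rpow_add hq0, Real.rpow_natCast]; ring

lemma summable_gg' (hq0 : 0 < q) (hq1 : q < 1) (a : ℝ) : Summable (fun ℓ : ℕ => gg q ((ℓ : ℝ) + a + 1)) := by
  simpa [add_assoc] using summable_gg hq0 hq1 (a + 1)

lemma tendsto_gg (hq0 : 0 < q) (hq1 : q < 1) (a : ℝ) :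
    Tendsto (fun n : ℕ => gg q ((n : ℝ) + a)) atTop (nhds 0) := by
  apply squeeze_zero (fun n => (gg_pos hq0 _).le)
    (g := fun n : ℕ => q ^ a * q ^ n) (fun n => ?_)
  · simpa using (tendsto_pow_atTop_nhds_zero_of_lt_one hq0.le hq1).const_mul (q ^ a)
  · calc gg q ((n : ℝ) + a) ≤ q ^ ((n : ℝ) + a) := gg_le_rpow hq0 _
      _ = q ^ a * q ^ n := by rw [Real.rpow_add hq0, Real.rpow_natCast]; ring

lemma hasSum_tel (hq0 : 0 < q) (hq1 : q < 1) (a : ℝ) :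
    HasSum (fun ℓ : ℕ => gg q ((ℓ : ℝ) + a) - gg q ((ℓ : ℝ) + a + 1)) (gg q a) := by
  have hs : Summable (fun ℓ : ℕ => gg q ((ℓ : ℝ) + a) - gg q ((ℓ : ℝ) + a + 1)) :=
    (summable_gg hq0 hq1 a).sub (summable_gg' hq0 hq1 a)
  rw [hs.hasSum_iff_tendsto_nat]
  have key : ∀ n : ℕ, ∑ i ∈ Finset.range n,
      (gg q ((i : ℝ) + a) - gg q ((i : ℝ) + a + 1)) = gg q a - gg q ((n : ℝ) + a) := by
    intro n
    have h1 : ∀ i : ℕ, gg q ((i : ℝ) + a + 1) = gg q (((i + 1 : ℕ) : ℝ) + a) := by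
      intro i; congr 1; push_cast; ring
    simp only [h1]
    rw [Finset.sum_range_sub' (fun i : ℕ => gg q ((i : ℝ) + a)) n]
    norm_num
  simp only [key]
  simpa using tendsto_const_nhds.sub (tendsto_gg hq0 hq1 a)

lemma hasSum_tel2 (hq0 : 0 < q) (hq1 : q < 1) :
    HasSum (fun ℓ : ℕ => gg q ((ℓ : ℝ) + 0) - gg q ((ℓ : ℝ) + 2)) (gg q 0 + gg q 1) := by
  have h := (hasSum_tel hq0 hq1 0).add (hasSum_tel hq0 hq1 1)
  have hfun : (fun ℓ : ℕ => gg q ((ℓ : ℝ) + 0) - gg q ((ℓ : ℝ) + 2))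
      = fun ℓ : ℕ => (gg q ((ℓ : ℝ) + 0) - gg q ((ℓ : ℝ) + 0 + 1))
        + (gg q ((ℓ : ℝ) + 1) - gg q ((ℓ : ℝ) + 1 + 1)) := by
    funext ℓ
    have e1 : (ℓ : ℝ) + 0 + 1 = (ℓ : ℝ) + 1 := by ring
    have e2 : (ℓ : ℝ) + 1 + 1 = (ℓ : ℝ) + 2 := by ring
    rw [e1, e2]; ring
  rw [hfun]; exact h

/-- The central fact: `h(β) = β + c(β,q)` lies in `(0,2)`, is `< 1` for `β < 1/2`
and `> 1` for `β > 1/2`. -/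
lemma key_bounds (hq0 : 0 < q) (hq1 : q < 1) {β : ℝ} (hβ0 : 0 ≤ β) (hβ1 : β < 1) :
    0 < β + cConst q β ∧ β + cConst q β < 2 ∧
      (β < 1 / 2 → β + cConst q β < 1) ∧ (1 / 2 < β → 1 < β + cConst q β) := by
  have hc : β + cConst q β
      = 1 - gg q β - (∑' ℓ : ℕ, gg q ((ℓ : ℝ) + (β + 1)))
        + ∑' ℓ : ℕ, gg q ((ℓ : ℝ) + (1 - β)) := by
    rw [cConst]
    have e1 : (∑' ℓ : ℕ, 1 / (1 + q ^ (-(ℓ : ℝ) - β - 1)))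
        = ∑' ℓ : ℕ, gg q ((ℓ : ℝ) + (β + 1)) := by
      apply tsum_congr; intro ℓ; rw [gg]; congr 2; ring
    have e2 : (∑' ℓ : ℕ, 1 / (1 + q ^ (-(ℓ : ℝ) + β - 1)))
        = ∑' ℓ : ℕ, gg q ((ℓ : ℝ) + (1 - β)) := by
      apply tsum_congr; intro ℓ; rw [gg]; congr 2; ring
    rw [e1, e2, gg]; ring
  set A := ∑' ℓ : ℕ, gg q ((ℓ : ℝ) + (β + 1)) with hAdef
  set B := ∑' ℓ : ℕ, gg q ((ℓ : ℝ) + (1 - β)) with hBdef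
  have sA : Summable (fun ℓ : ℕ => gg q ((ℓ : ℝ) + (β + 1))) := summable_gg hq0 hq1 _
  have sB : Summable (fun ℓ : ℕ => gg q ((ℓ : ℝ) + (1 - β))) := summable_gg hq0 hq1 _
  have s0 : Summable (fun ℓ : ℕ => gg q ((ℓ : ℝ) + 0)) := summable_gg hq0 hq1 _
  have s2 : Summable (fun ℓ : ℕ => gg q ((ℓ : ℝ) + 2)) := summable_gg hq0 hq1 _
  have sH : Summable (fun ℓ : ℕ => gg q ((ℓ : ℝ) + 1 / 2)) := summable_gg hq0 hq1 _
  have sH1 : Summable (fun ℓ : ℕ => gg q ((ℓ : ℝ) + 1 / 2 + 1)) := summable_gg' hq0 hq1 _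
  have hgβ0 : 0 < gg q β := gg_pos hq0 β
  have hgβ1 : gg q β < 1 := gg_lt_one hq0 β
  have hAB : A ≤ B :=
    Summable.tsum_le_tsum (fun ℓ => gg_anti hq0 hq1 (by linarith)) sA sB
  refine ⟨by rw [hc]; linarith, ?_, ?_, ?_⟩
  · -- h < 2
    have hB0 : B ≤ ∑' ℓ : ℕ, gg q ((ℓ : ℝ) + 0) :=
      Summable.tsum_le_tsum (fun ℓ => gg_anti hq0 hq1 (by linarith)) sB s0
    have hA2 : (∑' ℓ : ℕ, gg q ((ℓ : ℝ) + 2)) ≤ A :=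
      Summable.tsum_le_tsum (fun ℓ => gg_anti hq0 hq1 (by linarith)) s2 sA
    have htel : (∑' ℓ : ℕ, (gg q ((ℓ : ℝ) + 0) - gg q ((ℓ : ℝ) + 2)))
        = gg q 0 + gg q 1 := (hasSum_tel2 hq0 hq1).tsum_eq
    rw [Summable.tsum_sub s0 s2] at htel
    have h01 : gg q 1 < gg q 0 := gg_anti_strict hq0 hq1 one_pos
    have h0 : gg q 0 = 1 / 2 := gg_zero hq0
    rw [hc]; linarith
  · -- β < 1/2 → h < 1
    intro hb
    have hBh : B ≤ ∑' ℓ : ℕ, gg q ((ℓ : ℝ) + 1 / 2) :=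
      Summable.tsum_le_tsum (fun ℓ => gg_anti hq0 hq1 (by linarith)) sB sH
    have hAh : (∑' ℓ : ℕ, gg q ((ℓ : ℝ) + 1 / 2 + 1)) ≤ A :=
      Summable.tsum_le_tsum (fun ℓ => gg_anti hq0 hq1 (by linarith)) sH1 sA
    have htel : (∑' ℓ : ℕ, (gg q ((ℓ : ℝ) + 1 / 2) - gg q ((ℓ : ℝ) + 1 / 2 + 1)))
        = gg q (1 / 2) := (hasSum_tel hq0 hq1 (1 / 2)).tsum_eq
    rw [Summable.tsum_sub sH sH1] at htel
    have hstrict : gg q (1 / 2) < gg q β := gg_anti_strict hq0 hq1 hb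
    rw [hc]; linarith
  · -- 1/2 < β → 1 < h
    intro hb
    have hBh : (∑' ℓ : ℕ, gg q ((ℓ : ℝ) + 1 / 2)) ≤ B :=
      Summable.tsum_le_tsum (fun ℓ => gg_anti hq0 hq1 (by linarith)) sH sB
    have hAh : A ≤ ∑' ℓ : ℕ, gg q ((ℓ : ℝ) + 1 / 2 + 1) :=
      Summable.tsum_le_tsum (fun ℓ => gg_anti hq0 hq1 (by linarith)) sA sH1
    have htel : (∑' ℓ : ℕ, (gg q ((ℓ : ℝ) + 1 / 2) - gg q ((ℓ : ℝ) + 1 / 2 + 1)))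
        = gg q (1 / 2) := (hasSum_tel hq0 hq1 (1 / 2)).tsum_eq
    rw [Summable.tsum_sub sH sH1] at htel
    have hstrict : gg q β < gg q (1 / 2) := gg_anti_strict hq0 hq1 hb
    rw [hc]; linarith

end Aux

/-- For `0 < q < 1` and a real `f` whose fractional part `β = {f}` is not
`1/2`, the number `f + c(β, q)` is not an integer, and
`⌊f + c(β, q)⌋ = ⌊f⌋ + ⌊β + c(β, q)⌋`. -/
theorem floor_mean_approx (q f : ℝ) (hq0 : 0 < q) (hq1 : q < 1)
    (hβ : Int.fract f ≠ 1 / 2) :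
    (¬ ∃ z : ℤ, f + cConst q (Int.fract f) = (z : ℝ)) ∧
      ⌊f + cConst q (Int.fract f)⌋ = ⌊f⌋ + ⌊Int.fract f + cConst q (Int.fract f)⌋ := by
  obtain ⟨h0, h2, hlt, hgt⟩ :=
    key_bounds hq0 hq1 (Int.fract_nonneg f) (Int.fract_lt_one f)
  have hsum : (⌊f⌋ : ℝ) + Int.fract f = f := Int.floor_add_fract f
  have hne1 : Int.fract f + cConst q (Int.fract f) ≠ 1 := by
    rcases lt_or_gt_of_ne hβ with h | h
    · exact ne_of_lt (hlt h)
    · exact ne_of_gt (hgt h)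
  constructor
  · rintro ⟨z, hz⟩
    have key : Int.fract f + cConst q (Int.fract f) = ((z - ⌊f⌋ : ℤ) : ℝ) := by
      push_cast; linarith
    have h1' : (0 : ℝ) < ((z - ⌊f⌋ : ℤ) : ℝ) := by rw [← key]; exact h0
    have h2' : ((z - ⌊f⌋ : ℤ) : ℝ) < 2 := by rw [← key]; exact h2
    have hz1 : z - ⌊f⌋ = 1 := by
      have a1 : (0 : ℤ) < z - ⌊f⌋ := by exact_mod_cast h1'
      have a2 : (z - ⌊f⌋ : ℤ) < 2 := by exact_mod_cast h2'
      omega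
    apply hne1
    rw [key, hz1]; norm_num
  · have hre : f + cConst q (Int.fract f)
        = (Int.fract f + cConst q (Int.fract f)) + (⌊f⌋ : ℝ) := by linarith
    rw [hre, Int.floor_add_intCast]
    ring
end

section
/- Let 0 < q < 1 and θ > 0, and let X_n ∼ KB(n, θ q^{−n}, q). Then Y_n = n − X_n satisfies exactly, for every 0 ≤ x ≤ n, P(Y_n = x) = [n choose x]_q · q^{x(x−1)/2} · (q/θ)^x / (−q/θ; q)_n; consequently, for every fixed integer x ≥ 0, P(n − X_n = x) → q^{x(x−1)/2} (q/θ)^x/(q;q)_x · e_q(−q/θ) as n → ∞, i.e. n − X_n converges in distribution to the Heine distribution H(q/θ). -/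
/-!
Reflection `x ↦ n - x` maps `KB(n, t)` to `KB(n, q / (t qⁿ))`: the q-binomial coefficient is
symmetric, and pulling `t qⁱ` out of the `i`-th factor of `(-t; q)_n` and reversing the order of
the factors gives `(-t; q)_n = tⁿ q^(n(n-1)/2) (-q / (t qⁿ); q)_n`, while the numerator
`t^(n-x) q^((n-x)(n-x-1)/2)` picks up exactly the same factor. For `t = θ q⁻ⁿ` the new parameter
is `q / θ`, independent of `n`. Finally `KB(n, a) → H(a)` pointwise, since `[n choose x]_q` tends to
`1 / (q; q)_x` and `(-a; q)_n` tends to the nonzero infinite product `1 / e_q(-a)`.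
-/

open Filter Finset

/-- The q-shifted factorial `(z;q)_n = ∏_{i=0}^{n-1} (1 - z q^i)`. -/
noncomputable def qPoch (q z : ℝ) (n : ℕ) : ℝ := ∏ i ∈ range n, (1 - z * q ^ i)

/-- The q-binomial coefficient `[n choose k]_q = (q;q)_n / ((q;q)_k (q;q)_{n-k})`. -/
noncomputable def qBinom (q : ℝ) (n k : ℕ) : ℝ := qPoch q q n / (qPoch q q k * qPoch q q (n - k))

/-- The q-exponential `e_q(z) = 1/(z;q)_∞`. -/
noncomputable def qExp (q z : ℝ) : ℝ := (∏' i : ℕ, (1 - z * q ^ i))⁻¹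

/-- The probability `P(X = x)` for `X ∼ KB(n, θ, q)`, `0 ≤ x ≤ n`. -/
noncomputable def kbProbN (q θ : ℝ) (n x : ℕ) : ℝ :=
  qBinom q n x * θ ^ x * q ^ (x * (x - 1) / 2) / ∏ i ∈ range n, (1 + θ * q ^ i)

open Topology

lemma Nat.add_mul_add_sub_one_div_two (x m : ℕ) :
    (x + m) * (x + m - 1) / 2 = x * (x - 1) / 2 + m * (m - 1) / 2 + x * m := by
  rw [← sum_range_id, ← sum_range_id, ← sum_range_id, sum_range_add, sum_add_distrib, sum_const,
    card_range, smul_eq_mul]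
  ring

lemma Nat.sub_mul_sub_one_div_two_add {n x : ℕ} (hx : x ≤ n) :
    (n - x) * (n - x - 1) / 2 + n * x = n * (n - 1) / 2 + x + x * (x - 1) / 2 := by
  obtain ⟨m, rfl⟩ := Nat.exists_eq_add_of_le hx
  have hx2 : x * (x - 1) / 2 * 2 + x = x * x := by
    rw [← sum_range_id, sum_range_id_mul_two]
    cases x <;> simp [Nat.mul_add, Nat.mul_comm]
  rw [Nat.add_sub_cancel_left, Nat.add_mul_add_sub_one_div_two]
  nlinarith [hx2]

section Reflection

variable {q t : ℝ} {n x : ℕ}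

lemma qBinom_sub (q : ℝ) (hx : x ≤ n) : qBinom q n (n - x) = qBinom q n x := by
  rw [qBinom, qBinom, Nat.sub_sub_self hx, mul_comm]

lemma prod_range_one_add_mul_pow_reflect (hq : q ≠ 0) (ht : t ≠ 0) (n : ℕ) :
    ∏ i ∈ range n, (1 + t * q ^ i) =
      t ^ n * q ^ (n * (n - 1) / 2) * ∏ i ∈ range n, (1 + q / (t * q ^ n) * q ^ i) := by
  have hfactor : ∀ i ∈ range n,
      1 + t * q ^ i = t * q ^ i * (1 + q / (t * q ^ n) * q ^ (n - 1 - i)) := by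
    intro i hi
    have hpow : q ^ i * q * q ^ (n - 1 - i) = q ^ n := by
      rw [← pow_succ, ← pow_add]
      congr 1
      have := mem_range.mp hi
      omega
    field_simp
    linear_combination -hpow
  rw [prod_congr rfl hfactor, prod_mul_distrib, prod_range_reflect (fun i ↦ 1 + _ * q ^ i),
    prod_mul_distrib, prod_const, card_range, prod_pow_eq_pow_sum, sum_range_id]

lemma pow_sub_mul_pow_reflect (hq : q ≠ 0) (ht : t ≠ 0) (hx : x ≤ n) :
    t ^ (n - x) * q ^ ((n - x) * (n - x - 1) / 2) =
      t ^ n * q ^ (n * (n - 1) / 2) * ((q / (t * q ^ n)) ^ x * q ^ (x * (x - 1) / 2)) := by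
  have hq_exp : q ^ ((n - x) * (n - x - 1) / 2) * q ^ (n * x) =
      q ^ (n * (n - 1) / 2) * q ^ x * q ^ (x * (x - 1) / 2) := by
    rw [← pow_add, ← pow_add, ← pow_add, Nat.sub_mul_sub_one_div_two_add hx]
  have ht_exp : t ^ (n - x) * t ^ x = t ^ n := by rw [← pow_add, Nat.sub_add_cancel hx]
  rw [div_pow, mul_pow, ← pow_mul]
  field_simp
  linear_combination q ^ ((n - x) * (n - x - 1) / 2) * q ^ (x * n) * ht_exp + t ^ n * hq_exp

lemma kbProbN_sub (hq : q ≠ 0) (ht : t ≠ 0) (hx : x ≤ n) :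
    kbProbN q t n (n - x) = kbProbN q (q / (t * q ^ n)) n x := by
  have hc : t ^ n * q ^ (n * (n - 1) / 2) ≠ 0 := by positivity
  rw [kbProbN, kbProbN, qBinom_sub q hx, mul_assoc _ (t ^ _), pow_sub_mul_pow_reflect hq ht hx,
    prod_range_one_add_mul_pow_reflect hq ht, mul_left_comm, mul_div_mul_left _ _ hc, mul_assoc]

end Reflection

section Limits

variable {q : ℝ}

lemma summable_norm_neg_mul_pow (hq : |q| < 1) (z : ℝ) :
    Summable fun i : ℕ ↦ ‖-(z * q ^ i)‖ := by
  simpa [abs_mul] using (summable_geometric_of_lt_one (abs_nonneg q) hq).mul_left |z|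

lemma tendsto_qPoch_atTop (hq : |q| < 1) (z : ℝ) :
    Tendsto (qPoch q z) atTop (𝓝 (qExp q z)⁻¹) := by
  rw [qExp, inv_inv]
  simp_rw [sub_eq_add_neg]
  exact (multipliable_one_add_of_summable (summable_norm_neg_mul_pow hq z)).hasProd.tendsto_prod_nat

lemma qExp_ne_zero (hq : |q| < 1) {z : ℝ} (hz : ∀ i, z * q ^ i ≠ 1) : qExp q z ≠ 0 := by
  rw [qExp]
  simp_rw [sub_eq_add_neg]
  have hfactor : ∀ i, 1 + -(z * q ^ i) ≠ 0 := fun i ↦ by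
    rw [← sub_eq_add_neg, sub_ne_zero]
    exact (hz i).symm
  exact inv_ne_zero <| tprod_one_add_ne_zero_of_summable hfactor (summable_norm_neg_mul_pow hq z)

lemma qPoch_ne_zero {z : ℝ} (hz : ∀ i, z * q ^ i ≠ 1) (n : ℕ) : qPoch q z n ≠ 0 :=
  prod_ne_zero_iff.mpr fun i _ ↦ sub_ne_zero.mpr (hz i).symm

lemma mul_pow_ne_one_of_abs_lt_one (hq : |q| < 1) (i : ℕ) : q * q ^ i ≠ 1 := by
  rw [← pow_succ']
  exact fun h ↦ (pow_lt_one₀ (abs_nonneg q) hq i.succ_ne_zero).ne (by rw [← abs_pow, h, abs_one])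

lemma tendsto_qBinom_atTop (hq : |q| < 1) (x : ℕ) :
    Tendsto (fun n ↦ qBinom q n x) atTop (𝓝 (qPoch q q x)⁻¹) := by
  have hP := tendsto_qPoch_atTop hq q
  have hP0 : (qExp q q)⁻¹ ≠ 0 := inv_ne_zero (qExp_ne_zero hq (mul_pow_ne_one_of_abs_lt_one hq))
  have hx0 := qPoch_ne_zero (mul_pow_ne_one_of_abs_lt_one hq) x
  have := hP.div ((hP.comp (tendsto_sub_atTop_nat x)).const_mul (qPoch q q x))
    (mul_ne_zero hx0 hP0)
  rwa [div_mul_cancel_right₀ hP0] at this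

lemma qPoch_neg (q z : ℝ) (n : ℕ) : qPoch q (-z) n = ∏ i ∈ range n, (1 + z * q ^ i) := by
  simp only [qPoch, neg_mul, sub_neg_eq_add]

theorem tendsto_kbProbN_atTop (hq : |q| < 1) {θ : ℝ} (hθ : ∀ i, 1 + θ * q ^ i ≠ 0) (x : ℕ) :
    Tendsto (fun n ↦ kbProbN q θ n x) atTop
      (𝓝 (q ^ (x * (x - 1) / 2) * θ ^ x / qPoch q q x * qExp q (-θ))) := by
  have hθ' : ∀ i, -θ * q ^ i ≠ 1 := fun i h ↦ hθ i (by linarith)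
  have hD : Tendsto (fun n ↦ qPoch q (-θ) n) atTop _ := tendsto_qPoch_atTop hq (-θ)
  simp only [qPoch_neg] at hD
  have hlim : (qPoch q q x)⁻¹ * θ ^ x * q ^ (x * (x - 1) / 2) / (qExp q (-θ))⁻¹ =
      q ^ (x * (x - 1) / 2) * θ ^ x / qPoch q q x * qExp q (-θ) := by
    rw [div_inv_eq_mul]
    ring
  rw [← hlim]
  exact (((tendsto_qBinom_atTop hq x).mul_const _).mul_const _).div hD
    (inv_ne_zero (qExp_ne_zero hq hθ'))

end Limits

/-- For `X_n ∼ KB(n, θ q^{-n}, q)` and `Y_n = n - X_n`, we have exactly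
`P(Y_n = x) = [n choose x]_q q^{x(x-1)/2} (q/θ)^x / (-q/θ; q)_n` for `0 ≤ x ≤ n`;
consequently `n - X_n` converges in distribution to the Heine distribution `H(q/θ)`. -/
theorem kemp_exponential_param_to_heine (q θ : ℝ) (hq0 : 0 < q) (hq1 : q < 1) (hθ : 0 < θ) :
    (∀ n x : ℕ, x ≤ n →
        kbProbN q (θ * q ^ (-(n : ℤ))) n (n - x) =
          qBinom q n x * q ^ (x * (x - 1) / 2) * (q / θ) ^ x /
            ∏ i ∈ range n, (1 + q / θ * q ^ i)) ∧
      ∀ x : ℕ,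
        Tendsto (fun n : ℕ => kbProbN q (θ * q ^ (-(n : ℤ))) n (n - x)) atTop
          (nhds (q ^ (x * (x - 1) / 2) * (q / θ) ^ x / qPoch q q x * qExp q (-(q / θ)))) := by
  have hreflect : ∀ n x : ℕ, x ≤ n →
      kbProbN q (θ * q ^ (-(n : ℤ))) n (n - x) = kbProbN q (q / θ) n x := by
    intro n x hx
    rw [kbProbN_sub hq0.ne' (by positivity) hx, mul_assoc, zpow_neg, zpow_natCast,
      inv_mul_cancel₀ (by positivity), mul_one]
  refine ⟨fun n x hx ↦ ?_, fun x ↦ ?_⟩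
  · rw [hreflect n x hx, kbProbN, mul_right_comm (qBinom q n x)]
  · have hq : |q| < 1 := abs_lt.mpr ⟨by linarith, hq1⟩
    refine (tendsto_kbProbN_atTop hq (fun i ↦ by positivity) x).congr' ?_
    filter_upwards [eventually_ge_atTop x] with n hn using (hreflect n x hn).symm
end

section
/- Let 0 < q < 1 and let f : ℕ → ℝ with f(n) → ∞ as n → ∞, and let X_n ∼ KB(n, q^{−n−f(n)}, q). Then n − X_n converges in distribution to the point measure at 0; that is, P(n − X_n = 0) → 1 and P(n − X_n = x) → 0 for every fixed integer x ≥ 1. -/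
open Filter Finset

/-!
Write `θ = q^(-n-f(n))` and `tᵢ = θ qⁱ`; everything is controlled by `θ qⁿ = q^(-f(n)) → ∞`.
Since `[n n]_q = 1`, `P(X = n) = ∏_{i<n} (1 + tᵢ⁻¹)⁻¹`, and `∑ tᵢ⁻¹` is a geometric series
bounded by `q / ((1 - q) θ qⁿ)`, so `P(X = n) ≥ exp (-q / ((1 - q) θ qⁿ)) → 1`.
For `k < n`, `∏_{i<k} tᵢ ≤ ∏_{i<n-1} (1 + tᵢ)` gives `P(X = k) ≤ [n k]_q / (1 + t_{n-1})`, while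
`[n k]_q ≤ 1 / (q;q)_{n-k}` because `(q;q)_n ≤ (q;q)_k`; for `k = n - x` this is a constant.
-/

lemma qPoch_zero (q z : ℝ) : qPoch q z 0 = 1 :=
  prod_range_zero _

lemma qPoch_succ (q z : ℝ) (n : ℕ) : qPoch q z (n + 1) = qPoch q z n * (1 - z * q ^ n) :=
  prod_range_succ _ n

section QPoch

variable {q : ℝ}

lemma qPoch_pos (hq0 : 0 ≤ q) (hq1 : q < 1) (n : ℕ) : 0 < qPoch q q n :=
  prod_pos fun i _ => by nlinarith [pow_le_one₀ hq0 hq1.le (n := i), pow_nonneg hq0 i]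

lemma qPoch_antitone (hq0 : 0 ≤ q) (hq1 : q < 1) : Antitone (qPoch q q) :=
  antitone_nat_of_succ_le fun n => by
    rw [qPoch_succ]
    exact mul_le_of_le_one_right (qPoch_pos hq0 hq1 n).le (by nlinarith [pow_nonneg hq0 n])

lemma qBinom_self (hq0 : 0 ≤ q) (hq1 : q < 1) (n : ℕ) : qBinom q n n = 1 := by
  rw [qBinom, Nat.sub_self, qPoch_zero, mul_one, div_self (qPoch_pos hq0 hq1 n).ne']

lemma qBinom_nonneg (hq0 : 0 ≤ q) (hq1 : q < 1) (n k : ℕ) : 0 ≤ qBinom q n k :=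
  div_nonneg (qPoch_pos hq0 hq1 n).le
    (mul_nonneg (qPoch_pos hq0 hq1 k).le (qPoch_pos hq0 hq1 (n - k)).le)

lemma qBinom_le_inv_qPoch_sub (hq0 : 0 ≤ q) (hq1 : q < 1) {n k : ℕ} (hkn : k ≤ n) :
    qBinom q n k ≤ (qPoch q q (n - k))⁻¹ := by
  have hk := qPoch_pos hq0 hq1 k
  calc qBinom q n k ≤ qPoch q q k / (qPoch q q k * qPoch q q (n - k)) :=
        div_le_div_of_nonneg_right (qPoch_antitone hq0 hq1 hkn)
          (mul_pos hk (qPoch_pos hq0 hq1 _)).le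
    _ = (qPoch q q (n - k))⁻¹ := by field_simp

end QPoch

lemma prod_range_mul_pow {M : Type*} [CommMonoid M] (a q : M) (k : ℕ) :
    ∏ i ∈ range k, a * q ^ i = a ^ k * q ^ (k * (k - 1) / 2) := by
  rw [prod_mul_distrib, prod_const, card_range, prod_pow_eq_pow_sum, sum_range_id]

lemma sum_inv_mul_pow_le {a q : ℝ} (ha : 0 < a) (hq0 : 0 < q) (hq1 : q < 1) (n : ℕ) :
    ∑ i ∈ range n, (a * q ^ i)⁻¹ ≤ q / ((1 - q) * (a * q ^ n)) := by
  have hq : 0 < 1 - q := by linarith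
  induction n with
  | zero => simp only [range_zero, sum_empty, pow_zero, mul_one]; positivity
  | succ n ih =>
    calc ∑ i ∈ range (n + 1), (a * q ^ i)⁻¹ ≤ q / ((1 - q) * (a * q ^ n)) + (a * q ^ n)⁻¹ := by
          rw [sum_range_succ]; gcongr
      _ = q / ((1 - q) * (a * q ^ (n + 1))) := by field_simp; ring

lemma prod_div_prod_one_add_le {t : ℕ → ℝ} (ht : ∀ i, 0 ≤ t i) {k m : ℕ} (hkm : k ≤ m) :
    (∏ i ∈ range k, t i) / ∏ i ∈ range (m + 1), (1 + t i) ≤ (1 + t m)⁻¹ := by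
  have hpos : ∀ i, 0 < 1 + t i := fun i => by linarith [ht i]
  rw [prod_range_succ, div_le_iff₀ (mul_pos (prod_pos fun i _ => hpos i) (hpos m)),
    mul_comm, mul_assoc, mul_inv_cancel₀ (hpos m).ne', mul_one]
  calc ∏ i ∈ range k, t i ≤ ∏ i ∈ range k, (1 + t i) :=
        prod_le_prod (fun i _ => ht i) fun i _ => by linarith
    _ ≤ ∏ i ∈ range m, (1 + t i) :=
        prod_le_prod_of_subset_of_one_le (range_subset_range.2 hkm) (fun i _ => (hpos i).le)
          fun i _ _ => by linarith [ht i]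

lemma kbProbN_eq_prod (q θ : ℝ) (n k : ℕ) :
    kbProbN q θ n k =
      qBinom q n k * (∏ i ∈ range k, θ * q ^ i) / ∏ i ∈ range n, (1 + θ * q ^ i) := by
  rw [kbProbN, prod_range_mul_pow, mul_assoc]

section KempBinomial

variable {q θ : ℝ}

lemma kbProbN_nonneg (hq0 : 0 ≤ q) (hq1 : q < 1) (hθ : 0 ≤ θ) (n k : ℕ) :
    0 ≤ kbProbN q θ n k := by
  rw [kbProbN_eq_prod]
  exact div_nonneg (mul_nonneg (qBinom_nonneg hq0 hq1 n k) (prod_nonneg fun i _ => by positivity))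
    (prod_nonneg fun i _ => by positivity)

lemma kbProbN_le_of_lt (hq0 : 0 < q) (hq1 : q < 1) (hθ : 0 < θ) {n k : ℕ} (hkn : k < n) :
    kbProbN q θ n k ≤ (qPoch q q (n - k) * (θ * q ^ n))⁻¹ := by
  obtain ⟨m, rfl⟩ : ∃ m, n = m + 1 := ⟨n - 1, by omega⟩
  have hθq : θ * q ^ (m + 1) ≤ 1 + θ * q ^ m := by
    have := pow_le_pow_of_le_one hq0.le hq1.le (m.le_add_right 1)
    nlinarith
  rw [kbProbN_eq_prod, mul_div_assoc, mul_inv]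
  exact mul_le_mul (qBinom_le_inv_qPoch_sub hq0.le hq1 hkn.le)
    ((prod_div_prod_one_add_le (fun i => by positivity) (Nat.lt_succ_iff.1 hkn)).trans
      (inv_anti₀ (by positivity) hθq))
    (div_nonneg (prod_nonneg fun i _ => by positivity) (prod_nonneg fun i _ => by positivity))
    (inv_nonneg.2 (qPoch_pos hq0.le hq1 _).le)

lemma kbProbN_self_eq_inv_prod (hq0 : 0 < q) (hq1 : q < 1) (hθ : 0 < θ) (n : ℕ) :
    kbProbN q θ n n = (∏ i ∈ range n, (1 + (θ * q ^ i)⁻¹))⁻¹ := by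
  rw [kbProbN_eq_prod, qBinom_self hq0.le hq1, one_mul, ← prod_inv_distrib, ← prod_div_distrib]
  refine prod_congr rfl fun i _ => ?_
  have : 0 < θ * q ^ i := by positivity
  field_simp
  ring

lemma prod_one_add_inv_le_exp (hq0 : 0 < q) (hq1 : q < 1) (hθ : 0 < θ) (n : ℕ) :
    ∏ i ∈ range n, (1 + (θ * q ^ i)⁻¹) ≤ Real.exp (q / ((1 - q) * (θ * q ^ n))) :=
  (Real.prod_one_add_le_exp_sum _ fun i => by positivity).trans
    (Real.exp_le_exp.2 (sum_inv_mul_pow_le hθ hq0 hq1 n))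

end KempBinomial

/-- If `X_n ∼ KB(n, q^{-n-f(n)}, q)` with `f(n) → ∞`, then `n - X_n`
converges in distribution to the point measure at `0`: `P(n - X_n = 0) → 1` and
`P(n - X_n = x) → 0` for every fixed integer `x ≥ 1`. -/
theorem kemp_superexponential_param_degenerate (q : ℝ) (hq0 : 0 < q) (hq1 : q < 1)
    (f : ℕ → ℝ) (hf : Tendsto f atTop atTop) :
    Tendsto (fun n : ℕ => kbProbN q (q ^ (-(n : ℝ) - f n)) n n) atTop (nhds 1) ∧
      ∀ x : ℕ, 1 ≤ x →
        Tendsto (fun n : ℕ => kbProbN q (q ^ (-(n : ℝ) - f n)) n (n - x)) atTop (nhds 0) := by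
  have hθ (n : ℕ) : 0 < q ^ (-(n : ℝ) - f n) := Real.rpow_pos_of_pos hq0 _
  have hθq : Tendsto (fun n : ℕ => q ^ (-(n : ℝ) - f n) * q ^ n) atTop atTop := by
    have h (n : ℕ) : q ^ (-(n : ℝ) - f n) * q ^ n = q ^ (-f n) := by
      rw [sub_eq_add_neg, Real.rpow_add hq0, Real.rpow_neg hq0.le (n : ℝ), Real.rpow_natCast]
      field_simp
    simpa only [h, Function.comp_def] using
      (tendsto_rpow_atBot_of_base_lt_one q hq0 hq1).comp (tendsto_neg_atTop_atBot.comp hf)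
  constructor
  · have hexp : Tendsto (fun n : ℕ => Real.exp (q / ((1 - q) * (q ^ (-(n : ℝ) - f n) * q ^ n))))
        atTop (nhds 1) := by
      simpa [Function.comp_def] using (Real.continuous_exp.tendsto 0).comp
        (tendsto_const_nhds.div_atTop (hθq.const_mul_atTop (by linarith)))
    have hprod := tendsto_of_tendsto_of_tendsto_of_le_of_le tendsto_const_nhds hexp
      (fun n => one_le_prod fun i _ => le_add_of_nonneg_right (inv_nonneg.2 (by positivity)))
      (fun n => prod_one_add_inv_le_exp hq0 hq1 (hθ n) n)
    simpa only [kbProbN_self_eq_inv_prod hq0 hq1 (hθ _), inv_one] using hprod.inv₀ one_ne_zero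
  · intro x hx
    have hbound := tendsto_inv_atTop_zero.comp (hθq.const_mul_atTop (qPoch_pos hq0.le hq1 x))
    refine tendsto_of_tendsto_of_tendsto_of_le_of_le' tendsto_const_nhds hbound
      (Eventually.of_forall fun n => kbProbN_nonneg hq0.le hq1 (hθ n).le _ _) ?_
    filter_upwards [eventually_ge_atTop x] with n hn
    have := kbProbN_le_of_lt hq0 hq1 (hθ n) (by omega : n - x < n)
    rwa [Nat.sub_sub_self hn] at this
end
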